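/- arXiv:1902.06184 — 5 statements merged into one kernel-verified Lean document; each statement's English description precedes it below -/
import Mathlib

section
/- Let V be a g-dimensional complex vector space, L ⊂ V a lattice of rank 2g, H a Hermitian form on V with E = Im H integer-valued on L × L. Let L_E^⊥ = {x ∈ V : E(x,l) ∈ ℤ for all l ∈ L}. Then the identity component (connected component of 0) of the closed real Lie subgroup L_E^⊥ of V equals ker(H). -/
/-!
For `l ∈ L`, the function `v ↦ Im H(v, l)` is continuous and integer-valued on `L_E^⊥`, so it is
constant, hence zero, on the connected component of `0`. Since `L` spans `V` over `ℝ`, an `x` in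
that component has `Im H(x, ·) = 0`, and then `H(x, ·) = 0` because `H(x, ·)` is `ℂ`-linear.
Conversely `ker H` is a real subspace, hence connected, and lies in `L_E^⊥`.
-/

open ComplexConjugate

theorem eq_of_mem_connectedComponentIn_of_forall_int {X : Type*} [TopologicalSpace X]
    {S : Set X} {f : X → ℝ} (hf : Continuous f) (hS : ∀ x ∈ S, ∃ n : ℤ, f x = n) {x y : X}
    (hx : x ∈ connectedComponentIn S y) : f x = f y := by
  have hy : y ∈ S := connectedComponentIn_nonempty_iff.mp ⟨x, hx⟩
  have hInt : IsDiscrete (((↑) : ℤ → ℝ) '' Set.univ) :=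
    IsDiscrete.univ.image Int.isClosedEmbedding_coe_real.isInducing
  refine isPreconnected_connectedComponentIn.constant_of_mapsTo hInt hf.continuousOn
    (fun z hz => ?_) hx (mem_connectedComponentIn hy)
  obtain ⟨n, hn⟩ := hS z (connectedComponentIn_subset S y hz)
  exact ⟨n, trivial, hn.symm⟩

theorem LinearMap.eq_zero_of_im_eq_zero_of_span_eq_top {V : Type*} [AddCommGroup V]
    [Module ℂ V] {s : Set V} (hs : Submodule.span ℝ s = ⊤) {φ : V →ₗ[ℂ] ℂ}
    (h : ∀ u ∈ s, (φ u).im = 0) : φ = 0 := by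
  have him : Complex.imLm.comp (φ.restrictScalars ℝ) = 0 := LinearMap.ext_on hs h
  have him' (u : V) : (φ u).im = 0 := LinearMap.congr_fun him u
  ext u
  -- the real part of `φ u` is the imaginary part of `φ (I • u) = I * φ u`
  refine Complex.ext ?_ (him' u)
  simpa using him' (Complex.I • u)

section ConjSymm

variable {V : Type*} [AddCommGroup V] {H : V → V → ℂ}

theorem map_add_right_of_conj_symm (Hadd : ∀ u v w : V, H (u + v) w = H u w + H v w)
    (Hsymm : ∀ u v : V, H v u = conj (H u v)) (u v w : V) :
    H u (v + w) = H u v + H u w := by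
  rw [Hsymm (v + w), Hadd, map_add, ← Hsymm, ← Hsymm]

variable [Module ℂ V]

theorem map_smul_right_of_conj_symm (Hsmul : ∀ (c : ℂ) (u v : V), H (c • u) v = conj c * H u v)
    (Hsymm : ∀ u v : V, H v u = conj (H u v)) (c : ℂ) (u v : V) :
    H u (c • v) = c * H u v := by
  rw [Hsymm (c • v), Hsmul, map_mul, Complex.conj_conj, ← Hsymm]

def sesqFormOfConjSymm (Hadd : ∀ u v w : V, H (u + v) w = H u w + H v w)
    (Hsmul : ∀ (c : ℂ) (u v : V), H (c • u) v = conj c * H u v)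
    (Hsymm : ∀ u v : V, H v u = conj (H u v)) : V →ₗ⋆[ℂ] V →ₗ[ℂ] ℂ :=
  LinearMap.mk₂'ₛₗ _ _ H Hadd Hsmul (map_add_right_of_conj_symm Hadd Hsymm)
    (map_smul_right_of_conj_symm Hsmul Hsymm)

@[simp]
theorem sesqFormOfConjSymm_apply {Hadd Hsmul Hsymm} (u v : V) :
    sesqFormOfConjSymm (H := H) Hadd Hsmul Hsymm u v = H u v :=
  rfl

end ConjSymm

theorem stmt4_general {V : Type*} [NormedAddCommGroup V] [NormedSpace ℂ V]
    [FiniteDimensional ℂ V]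
    (L : AddSubgroup V)
    (hspan : Submodule.span ℝ (L : Set V) = ⊤)
    (H : V → V → ℂ)
    (Hadd : ∀ u v w : V, H (u + v) w = H u w + H v w)
    (Hsmul : ∀ (c : ℂ) (u v : V), H (c • u) v = (starRingEnd ℂ) c * H u v)
    (Hsymm : ∀ u v : V, H v u = (starRingEnd ℂ) (H u v)) :
    connectedComponentIn {x : V | ∀ l ∈ L, ∃ n : ℤ, (H x l).im = (n : ℝ)} 0 =
      {v : V | ∀ u : V, H v u = 0} := by
  set B := sesqFormOfConjSymm Hadd Hsmul Hsymm
  have hker : {v : V | ∀ u : V, H v u = 0} = LinearMap.ker B := by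
    ext v; simp [B, LinearMap.ext_iff]
  rw [hker]
  refine subset_antisymm (fun x hx => ?_) ?_
  · refine LinearMap.eq_zero_of_im_eq_zero_of_span_eq_top hspan fun l hl => ?_
    have hcont : Continuous fun v => (H v l).im := by
      have hconj : (fun v => (H v l).im) = fun v => -(B l v).im :=
        funext fun v => by simp [B, Hsymm l v]
      exact hconj ▸ (Complex.continuous_im.comp (B l).continuous_of_finiteDimensional).neg
    have h0 : H 0 l = 0 := LinearMap.map_zero₂ B l
    simpa [B, h0] using
      eq_of_mem_connectedComponentIn_of_forall_int hcont (fun v hv => by exact hv l hl) hx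
  · refine ((LinearMap.ker B).restrictScalars ℝ).convex.isPreconnected
      |>.subset_connectedComponentIn (zero_mem _) fun v hv l _ => ⟨0, ?_⟩
    simp [show H v l = 0 from LinearMap.congr_fun (LinearMap.mem_ker.mp hv) l]

/-- Let `V` be a `g`-dimensional complex vector space, `L ⊂ V` a lattice of rank `2g`
(a discrete subgroup spanning `V` over `ℝ`), `H` a Hermitian form on `V` whose
imaginary part `E = Im H` is integer-valued on `L × L`.  Then the connected component
of `0` in `L_E^⊥ = {x ∈ V : E(x,l) ∈ ℤ ∀ l ∈ L}` equals `ker H`. -/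
theorem stmt4 {V : Type*} [NormedAddCommGroup V] [NormedSpace ℂ V]
    [FiniteDimensional ℂ V]
    (L : AddSubgroup V) (hdisc : DiscreteTopology L)
    (hspan : Submodule.span ℝ (L : Set V) = ⊤)
    (H : V → V → ℂ)
    (Hadd : ∀ u v w : V, H (u + v) w = H u w + H v w)
    (Hsmul : ∀ (c : ℂ) (u v : V), H (c • u) v = (starRingEnd ℂ) c * H u v)
    (Hsymm : ∀ u v : V, H v u = (starRingEnd ℂ) (H u v))
    (hint : ∀ l ∈ L, ∀ m ∈ L, ∃ n : ℤ, (H l m).im = (n : ℝ)) :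
    connectedComponentIn {x : V | ∀ l ∈ L, ∃ n : ℤ, (H x l).im = (n : ℝ)} 0 =
      {v : V | ∀ u : V, H v u = 0} :=
  stmt4_general L hspan H Hadd Hsmul Hsymm
end

section
/- Let D be a finite abelian group equipped with a nondegenerate alternating bimultiplicative pairing e: D × D → ℂ*. If A ⊆ D is an isotropic subgroup (e vanishes on A × A), then the index [D : A] is divisible by √#D. Moreover, for any maximal isotropic subgroup U, #U = [D : U] = √#D. -/
/-!
The orthogonal complement `A^⊥` of a subgroup `A` is the kernel of `D → Hom(A, ℂˣ)`,
`x ↦ e(x, ·)|_A`. Nondegeneracy and `#Hom(D, ℂˣ) = #D` make `x ↦ e(x, ·)` an isomorphism onto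
the dual of `D`, and characters of `A` extend to `D`, so this map is onto and `[D : A^⊥] = #A`.
Alternation makes `⊥` symmetric, so a maximal isotropic `U` satisfies `U^⊥ = U` (any `x ∈ U^⊥`
could be adjoined to `U`); hence `#U = [D : U]` and `#D = #U ^ 2`. An arbitrary isotropic `A`
lies in a maximal one `U`, and `[D : U] = √#D` divides `[D : A]`.
-/

theorem mul_swap_eq_one_of_alternating {D M : Type*} [Mul D] [CommMonoid M] (e : D → D → M)
    (hbm₁ : ∀ x y z, e (x * y) z = e x z * e y z) (hbm₂ : ∀ x y z, e x (y * z) = e x y * e x z)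
    (halt : ∀ x, e x x = 1) (x y : D) : e x y * e y x = 1 := by
  have h := halt (x * y)
  rw [hbm₁, hbm₂, hbm₂, halt, halt] at h
  simpa using h

def alternatingUnitsPairing {D M : Type*} [MulOneClass D] [CommMonoid M] (e : D → D → M)
    (hbm₁ : ∀ x y z, e (x * y) z = e x z * e y z) (hbm₂ : ∀ x y z, e x (y * z) = e x y * e x z)
    (halt : ∀ x, e x x = 1) : D →* D →* Mˣ :=
  MonoidHom.mk'
    (fun x => MonoidHom.mk'
      (fun y => ⟨e x y, e y x, mul_swap_eq_one_of_alternating e hbm₁ hbm₂ halt x y,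
        mul_swap_eq_one_of_alternating e hbm₁ hbm₂ halt y x⟩)
      fun y z => Units.ext (hbm₂ x y z))
    fun x y => MonoidHom.ext fun z => Units.ext (hbm₁ x y z)

namespace MonoidHom

section Perp

variable {G H P : Type*} [Group G] [CommGroup H] [CommMonoid P] (B : G →* H →* P)

def leftPerp (A : Subgroup H) : Subgroup G :=
  ((domRestrictHom A P).comp B).ker

variable {B}

theorem mem_leftPerp {A : Subgroup H} {x : G} : x ∈ leftPerp B A ↔ A ≤ (B x).ker := by
  simp [leftPerp, DFunLike.ext_iff, SetLike.le_def]

theorem leftPerp_sup (A A' : Subgroup H) :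
    leftPerp B (A ⊔ A') = leftPerp B A ⊓ leftPerp B A' := by
  ext x
  simp only [Subgroup.mem_inf, mem_leftPerp, sup_le_iff]

theorem mem_leftPerp_zpowers {x : G} {h : H} :
    x ∈ leftPerp B (Subgroup.zpowers h) ↔ B x h = 1 := by
  rw [mem_leftPerp, Subgroup.zpowers_le, mem_ker]

end Perp

section Duality

variable {G H M : Type*} [Group G] [CommGroup H] [Finite H] [CommMonoid M]
  [HasEnoughRootsOfUnity M (Monoid.exponent H)]

theorem index_leftPerp {B : G →* H →* Mˣ} (hB : Function.Surjective B) (A : Subgroup H) :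
    (leftPerp B A).index = Nat.card A := by
  have : HasEnoughRootsOfUnity M (Monoid.exponent A) :=
    HasEnoughRootsOfUnity.of_dvd M (Monoid.exponent_submonoid_dvd A.toSubmonoid)
  have hsurj : Function.Surjective ((domRestrictHom A Mˣ).comp B) :=
    (domRestrict_surjective M A).comp hB
  rw [leftPerp, Subgroup.index_ker, range_eq_top.mpr hsurj, Subgroup.card_top,
    CommGroup.card_monoidHom_of_hasEnoughRootsOfUnity]

theorem pairing_surjective_of_injective {B : H →* H →* Mˣ} (hB : Function.Injective B) :
    Function.Surjective B := by
  have hcard := CommGroup.card_monoidHom_of_hasEnoughRootsOfUnity H M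
  have : Finite (H →* Mˣ) := Nat.finite_of_card_ne_zero (hcard ▸ Nat.card_pos.ne')
  exact (hB.bijective_of_nat_card_le hcard.le).surjective

end Duality

section Alternating

variable {D M : Type*} [CommGroup D]

theorem le_leftPerp_self_iff {P : Type*} [CommMonoid P] {B : D →* D →* P} {A : Subgroup D} :
    A ≤ leftPerp B A ↔ ∀ a₁ ∈ A, ∀ a₂ ∈ A, B a₁ a₂ = 1 := by
  simp only [SetLike.le_def, mem_leftPerp, mem_ker]

theorem apply_swap_eq_one_iff [CommGroup M] {B : D →* D →* M} (hB : ∀ x, B x x = 1) {x y : D} :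
    B y x = 1 ↔ B x y = 1 := by
  rw [eq_inv_of_mul_eq_one_right (mul_swap_eq_one_of_alternating (fun x y => B x y)
    (by simp) (by simp) hB x y), inv_eq_one]

theorem leftPerp_eq_self_of_maximal [CommGroup M] {B : D →* D →* M} (hB : ∀ x, B x x = 1)
    {U : Subgroup D} (hU : Maximal (fun V => V ≤ leftPerp B V) U) : leftPerp B U = U := by
  refine le_antisymm (fun x hx => ?_) hU.prop
  have hUx : U ≤ leftPerp B (Subgroup.zpowers x) := fun u hu =>
    mem_leftPerp_zpowers.mpr ((apply_swap_eq_one_iff hB).mpr (mem_leftPerp.mp hx hu))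
  have hiso : U ⊔ Subgroup.zpowers x ≤ leftPerp B (U ⊔ Subgroup.zpowers x) := by
    rw [leftPerp_sup]
    exact sup_le (le_inf hU.prop hUx)
      (Subgroup.zpowers_le.mpr ⟨hx, mem_leftPerp_zpowers.mpr (hB x)⟩)
  rw [hU.eq_of_le hiso le_sup_left]
  exact Subgroup.mem_sup_right (Subgroup.mem_zpowers x)

variable [Finite D] [CommMonoid M] [HasEnoughRootsOfUnity M (Monoid.exponent D)]
  {B : D →* D →* Mˣ} (hB : ∀ x, B x x = 1) (hnd : Function.Injective B)
include hB hnd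

theorem card_eq_index_of_maximal {U : Subgroup D} (hU : Maximal (fun V => V ≤ leftPerp B V) U) :
    Nat.card U = U.index := by
  rw [← index_leftPerp (pairing_surjective_of_injective hnd) U,
    leftPerp_eq_self_of_maximal hB hU]

theorem card_eq_sq_of_maximal {U : Subgroup D} (hU : Maximal (fun V => V ≤ leftPerp B V) U) :
    Nat.card D = Nat.card U ^ 2 := by
  rw [sq]
  nth_rewrite 2 [card_eq_index_of_maximal hB hnd hU]
  exact (Subgroup.card_mul_index U).symm

theorem exists_sq_eq_card_and_dvd_index {A : Subgroup D} (hA : A ≤ leftPerp B A) :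
    ∃ m : ℕ, Nat.card D = m ^ 2 ∧ m ∣ A.index := by
  obtain ⟨U, hAU, hU⟩ := Finite.exists_le_maximal (p := fun V => V ≤ leftPerp B V) hA
  refine ⟨Nat.card U, card_eq_sq_of_maximal hB hnd hU, ?_⟩
  rw [card_eq_index_of_maximal hB hnd hU]
  exact Subgroup.index_dvd_of_le hAU

end Alternating

end MonoidHom

open MonoidHom in
/-- Let `D` be a finite abelian group with a nondegenerate alternating bimultiplicative
pairing `e : D × D → ℂ*`.  Every isotropic subgroup `A ⊆ D` has index divisible by
`√#D` (which is an integer), and every maximal isotropic subgroup `U` satisfies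
`#U = [D : U] = √#D`. -/
theorem stmt13 {D : Type*} [CommGroup D] [Finite D]
    (e : D → D → ℂ)
    (hbm₁ : ∀ x y z : D, e (x * y) z = e x z * e y z)
    (hbm₂ : ∀ x y z : D, e x (y * z) = e x y * e x z)
    (halt : ∀ x : D, e x x = 1)
    (hnd : ∀ x : D, (∀ y : D, e x y = 1) → x = 1) :
    (∀ A : Subgroup D, (∀ a₁ ∈ A, ∀ a₂ ∈ A, e a₁ a₂ = 1) →
      ∃ m : ℕ, Nat.card D = m ^ 2 ∧ m ∣ A.index) ∧
    (∀ U : Subgroup D, (∀ a₁ ∈ U, ∀ a₂ ∈ U, e a₁ a₂ = 1) →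
      (∀ U' : Subgroup D, U ≤ U' → (∀ a₁ ∈ U', ∀ a₂ ∈ U', e a₁ a₂ = 1) → U' = U) →
      Nat.card U = U.index ∧ Nat.card D = (Nat.card U) ^ 2) := by
  set B := alternatingUnitsPairing e hbm₁ hbm₂ halt
  have hB : ∀ x, B x x = 1 := fun x => Units.ext (halt x)
  have hinj : Function.Injective B := (injective_iff_map_eq_one B).mpr fun x hx =>
    hnd x fun y => congrArg Units.val (DFunLike.congr_fun hx y)
  have hiso (A : Subgroup D) : (∀ a₁ ∈ A, ∀ a₂ ∈ A, e a₁ a₂ = 1) ↔ A ≤ leftPerp B A := by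
    simp only [le_leftPerp_self_iff, ← Units.val_eq_one]
    rfl
  refine ⟨fun A hA => exists_sq_eq_card_and_dvd_index hB hinj ((hiso A).mp hA),
    fun U hU hmax => ?_⟩
  have hUmax : Maximal (fun V => V ≤ leftPerp B V) U :=
    ⟨(hiso U).mp hU, fun V hV hUV => (hmax V hUV ((hiso V).mpr hV)).le⟩
  exact ⟨card_eq_index_of_maximal hB hinj hUmax, card_eq_sq_of_maximal hB hinj hUmax⟩
end

section
/- Let G be a group containing ℂ* as a central subgroup, with a surjective homomorphism κ: G → K onto an abelian group K, ker κ = ℂ*. Let Δ ⊆ K be a finite subgroup. Then there exists a finite subgroup Δ̃ of G with κ(Δ̃) = Δ. (Explicitly, if d is the exponent of Δ, one can take Δ̃ = {γ·x̃ : γ ∈ μ_{d²}, x ∈ Δ} where each x̃ is a lift of x of the same order as x with (−x)~ = x̃⁻¹.) -/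
/-!
Let `H = κ⁻¹(Δ)`. The central subgroup `ℂ* = ker κ` has index `n = |Δ|` in `H`, so the centre of
`H` has index dividing `n`, and the transfer `H → Z(H)` shows that `g ↦ g ^ n` is multiplicative
on `H`. Hence `Δ̃ = {g ∈ H | g ^ n = 1}` is a subgroup. It maps onto `Δ`: a lift `g` of `x ∈ Δ`
has `g ^ n ∈ ℂ*`, and multiplying `g` by an `n`-th root of `g⁻ⁿ` kills this power. It is
finite: `Δ̃ ∩ ℂ* ⊆ μ_n` and `κ(Δ̃) = Δ` are finite.
-/

open Subgroup

theorem mul_pow_of_index_center_dvd {H : Type*} [Group H] {k : ℕ}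
    (hk : (center H).index ∣ k) (hk0 : k ≠ 0) (g h : H) :
    (g * h) ^ k = g ^ k * h ^ k := by
  obtain ⟨m, rfl⟩ := hk
  have : (center H).FiniteIndex := ⟨left_ne_zero_of_mul hk0⟩
  have hT : (g * h) ^ (center H).index = g ^ (center H).index * h ^ (center H).index :=
    congrArg Subtype.val (map_mul (MonoidHom.transferCenterPow H) g h)
  have hc : Commute (g ^ (center H).index) (h ^ (center H).index) :=
    (mem_center_iff.mp ((center H).pow_index_mem g) _).symm
  rw [pow_mul, hT, hc.mul_pow, ← pow_mul, ← pow_mul]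

def Subgroup.torsionBy {G : Type*} [Group G] (H : Subgroup G) (k : ℕ)
    (hmul : ∀ g ∈ H, ∀ h ∈ H, (g * h) ^ k = g ^ k * h ^ k) : Subgroup G where
  carrier := {g | g ∈ H ∧ g ^ k = 1}
  one_mem' := ⟨H.one_mem, one_pow k⟩
  mul_mem' := fun ⟨hg, hgk⟩ ⟨hh, hhk⟩ =>
    ⟨H.mul_mem hg hh, by rw [hmul _ hg _ hh, hgk, hhk, one_mul]⟩
  inv_mem' := fun ⟨hg, hgk⟩ => ⟨H.inv_mem hg, by rw [inv_pow, hgk, inv_one]⟩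

theorem Subgroup.finite_of_finite_map_of_finite_inf_ker {G K : Type*} [Group G] [Group K]
    (S : Subgroup G) (κ : G →* K) (hmap : Finite (S.map κ)) (hker : Finite ↥(S ⊓ κ.ker)) :
    Finite S := by
  rw [(κ.domRestrict S).finite_iff_finite_ker_range, MonoidHom.ker_domRestrict,
    MonoidHom.domRestrict_range]
  refine ⟨?_, hmap⟩
  have e := (κ.ker.subgroupOf S).equivMapOfInjective S.subtype S.subtype_injective
  rw [subgroupOf_map_subtype, inf_comm] at e
  exact e.finite_iff.mpr hker

theorem IsAlgClosed.exists_units_pow_eq {F : Type*} [Field F] [IsAlgClosed F] (c : Fˣ) {k : ℕ}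
    (hk : k ≠ 0) : ∃ ζ : Fˣ, ζ ^ k = c := by
  obtain ⟨z, hz⟩ := IsAlgClosed.exists_pow_nat_eq (c : F) (Nat.pos_of_ne_zero hk)
  have hz0 : z ≠ 0 := by
    rintro rfl
    exact c.ne_zero (by rw [← hz, zero_pow hk])
  exact ⟨Units.mk0 z hz0, Units.ext (by simpa using hz)⟩

section CentralExtension

variable {G K F : Type*} [Group G] [Group K] [Field F] {ι : Fˣ →* G} {κ : G →* K}

theorem index_center_comap_dvd_card (hκ : Function.Surjective κ) (hker : κ.ker ≤ center G)
    (Δ : Subgroup K) : (center (Δ.comap κ)).index ∣ Nat.card Δ := by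
  have hle : (κ.subgroupComap Δ).ker ≤ center (Δ.comap κ) := fun z hz =>
    mem_center_iff.mpr fun g => Subtype.ext (mem_center_iff.mp (hker (Subtype.ext_iff.mp hz)) g)
  have hrange : (κ.subgroupComap Δ).range = ⊤ :=
    MonoidHom.range_eq_top.mpr (κ.subgroupComap_surjective_of_surjective Δ hκ)
  simpa [index_ker, hrange] using index_dvd_of_le hle

theorem mul_pow_card_of_mem_comap (hκ : Function.Surjective κ) (hker : κ.ker ≤ center G)
    {Δ : Subgroup K} [Finite Δ] {g h : G} (hg : κ g ∈ Δ) (hh : κ h ∈ Δ) :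
    (g * h) ^ Nat.card Δ = g ^ Nat.card Δ * h ^ Nat.card Δ :=
  congrArg Subtype.val <| mul_pow_of_index_center_dvd (index_center_comap_dvd_card hκ hker Δ)
    Nat.card_pos.ne' (⟨g, hg⟩ : Δ.comap κ) ⟨h, hh⟩

theorem exists_lift_pow_eq_one [IsAlgClosed F] (hcent : ∀ c, ι c ∈ center G)
    (hκ : Function.Surjective κ) (hker : κ.ker = ι.range) {k : ℕ} (hk : k ≠ 0) {x : K}
    (hx : x ^ k = 1) : ∃ g, κ g = x ∧ g ^ k = 1 := by
  obtain ⟨g, rfl⟩ := hκ x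
  obtain ⟨c, hc⟩ : g ^ k ∈ ι.range := hker ▸ (by simpa [MonoidHom.mem_ker] using hx)
  obtain ⟨ζ, hζ⟩ := IsAlgClosed.exists_units_pow_eq c⁻¹ hk
  have hζκ : κ (ι ζ) = 1 := (hker ▸ ⟨ζ, rfl⟩ : ι ζ ∈ κ.ker)
  have hcomm : Commute g (ι ζ) := mem_center_iff.mp (hcent ζ) g
  refine ⟨g * ι ζ, by rw [map_mul, hζκ, mul_one], ?_⟩
  rw [hcomm.mul_pow, ← map_pow, hζ, ← hc, ← map_mul, mul_inv_cancel, map_one]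

theorem finite_inf_ker_of_forall_pow_eq_one (hι : Function.Injective ι) (hker : κ.ker = ι.range)
    {S : Subgroup G} {k : ℕ} (hk : k ≠ 0) (hS : ∀ g ∈ S, g ^ k = 1) : Finite ↥(S ⊓ κ.ker) := by
  have : NeZero k := ⟨hk⟩
  have hsub : ((S ⊓ κ.ker : Subgroup G) : Set G) ⊆ ι '' (rootsOfUnity k F : Set Fˣ) := by
    rintro g ⟨hgS, hgκ⟩
    obtain ⟨γ, rfl⟩ : g ∈ ι.range := hker ▸ hgκ
    exact ⟨γ, (mem_rootsOfUnity k γ).mpr (hι (by rw [map_pow, hS _ hgS, map_one])), rfl⟩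
  exact (((Set.finite_coe_iff.mp (inferInstanceAs (Finite (rootsOfUnity k F)))).image ι).subset
    hsub).to_subtype

end CentralExtension

/-- Let `G` be a group containing `ℂ*` as a central subgroup, with a surjective
homomorphism `κ : G → K` onto an abelian group `K` with `ker κ = ℂ*`.  Then every
finite subgroup `Δ` of `K` lifts to a finite subgroup `Δ̃` of `G` with `κ(Δ̃) = Δ`. -/
theorem stmt14 {G K : Type*} [Group G] [CommGroup K]
    (ι : ℂˣ →* G) (hι : Function.Injective ι)
    (hcent : ∀ c : ℂˣ, ι c ∈ Subgroup.center G)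
    (κ : G →* K) (hκ : Function.Surjective κ)
    (hker : κ.ker = ι.range)
    (Δ : Subgroup K) (hΔ : (Δ : Set K).Finite) :
    ∃ Δ' : Subgroup G, (Δ' : Set G).Finite ∧ Subgroup.map κ Δ' = Δ := by
  have : Finite Δ := hΔ.to_subtype
  have hker_center : κ.ker ≤ center G := hker ▸ fun _ ⟨c, hc⟩ => hc ▸ hcent c
  have hn : Nat.card Δ ≠ 0 := Nat.card_pos.ne'
  let Δ' := (Δ.comap κ).torsionBy (Nat.card Δ) fun _ hg _ hh =>
    mul_pow_card_of_mem_comap hκ hker_center hg hh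
  have hmap : Δ'.map κ = Δ := by
    refine le_antisymm (map_le_iff_le_comap.mpr fun _ hg => hg.1) fun x hx => ?_
    obtain ⟨g, rfl, hg⟩ := exists_lift_pow_eq_one hcent hκ hker hn
      (congrArg Subtype.val (pow_card_eq_one' (x := (⟨x, hx⟩ : Δ))))
    exact ⟨g, ⟨hx, hg⟩, rfl⟩
  have : Finite Δ' := Δ'.finite_of_finite_map_of_finite_inf_ker κ (hmap ▸ this)
    (finite_inf_ker_of_forall_pow_eq_one hι hker hn fun _ hg => hg.2)
  exact ⟨Δ', Set.toFinite _, hmap⟩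
end

section
/- Let 1 → ℂ* → G → K → 1 be a central extension of a finite abelian group K by ℂ*, whose commutator pairing e: K × K → ℂ* is nondegenerate. Then G is Jordan with Jordan constant exactly √#K: every finite subgroup B̃ of G contains an abelian normal subgroup of index at most √#K, and there exists a finite subgroup of G for which no abelian normal subgroup has smaller index. -/
/-!
Lifting to `G`, the commutator pairing `e` is an alternating bicharacter of `K`, and a subgroup
of `G` is abelian exactly when its image in `K` is isotropic. Nondegeneracy embeds `I^⊥` into the
characters of `K ⧸ I`, so `|I| * |I^⊥| ≤ |K|`; and a maximal isotropic subgroup `L` of `H`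
satisfies `H ⊓ L^⊥ = L`, so `|H| ≤ |L|²`. Hence `|K| = m²`, where `m` is the largest order of an
isotropic subgroup.

For a finite `B ≤ G`, the preimage in `B` of a maximal isotropic subgroup of `κ(B)` is an abelian
normal subgroup of index at most `m`. For sharpness, the transfer makes `g ↦ g ^ n` a
homomorphism for `n = [G : Z(G)] * |K|`; its kernel is a finite subgroup `B` mapping onto `K`,
and an abelian `A ≤ B` has `|A| ≤ m * |A ⊓ ker κ|` while `|B| = m² * |B ⊓ ker κ|`.
-/

open Subgroup Function

theorem Subgroup.card_inf_mul_relIndex {G : Type*} [Group G] (H K : Subgroup G) :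
    Nat.card (K ⊓ H : Subgroup G) * H.relIndex K = Nat.card K := by
  rw [← inf_relIndex_left K H, ← relIndex_bot_left, ← relIndex_bot_left,
    relIndex_mul_relIndex _ _ _ bot_le inf_le_left]

namespace MonoidHom

variable {K : Type*} [CommGroup K] (ε : K →* K →* ℂˣ)

def perp (I : Subgroup K) : Subgroup K :=
  ((domRestrictHom I ℂˣ).comp ε).ker

def IsIsotropic (I : Subgroup K) : Prop :=
  I ≤ ε.perp I

variable {ε}

theorem mem_perp {I : Subgroup K} {x : K} : x ∈ ε.perp I ↔ I ≤ (ε x).ker := by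
  simp [perp, SetLike.le_def]

theorem mem_perp_zpowers {x y : K} : x ∈ ε.perp (zpowers y) ↔ ε x y = 1 := by
  rw [mem_perp, zpowers_le, mem_ker]

theorem perp_sup (I J : Subgroup K) : ε.perp (I ⊔ J) = ε.perp I ⊓ ε.perp J := by
  ext x
  simp only [mem_inf, mem_perp, sup_le_iff]

theorem isIsotropic_iff {I : Subgroup K} : ε.IsIsotropic I ↔ ∀ x ∈ I, ∀ y ∈ I, ε x y = 1 := by
  simp only [IsIsotropic, SetLike.le_def, mem_perp, mem_ker]

theorem IsIsotropic.mono {I J : Subgroup K} (hI : ε.IsIsotropic I) (hJI : J ≤ I) :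
    ε.IsIsotropic J :=
  isIsotropic_iff.mpr fun x hx y hy => isIsotropic_iff.mp hI x (hJI hx) y (hJI hy)

theorem apply_eq_one_comm (hε : ∀ a, ε a a = 1) {a b : K} : ε a b = 1 ↔ ε b a = 1 := by
  have h := hε (a * b)
  simp only [map_mul, mul_apply, hε, one_mul, mul_one] at h
  rw [eq_inv_of_mul_eq_one_right h, inv_eq_one]

theorem IsIsotropic.sup_zpowers (hε : ∀ a, ε a a = 1) {L : Subgroup K} (hL : ε.IsIsotropic L)
    {x : K} (hx : x ∈ ε.perp L) : ε.IsIsotropic (L ⊔ zpowers x) := by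
  have hxL : L ≤ ε.perp (zpowers x) := fun l hl =>
    mem_perp_zpowers.mpr ((apply_eq_one_comm hε).mp (mem_perp.mp hx hl))
  have hxx : zpowers x ≤ ε.perp (zpowers x) := zpowers_le.mpr (mem_perp_zpowers.mpr (hε x))
  rw [IsIsotropic, perp_sup]
  exact sup_le (le_inf hL hxL) (le_inf (zpowers_le.mpr hx) hxx)

variable [Finite K]

variable (ε) in
theorem card_le_card_inf_perp_mul_card (H I : Subgroup K) :
    Nat.card H ≤ Nat.card (H ⊓ ε.perp I : Subgroup K) * Nat.card I := by
  have hrange : (ε.perp I).relIndex H ≤ Nat.card I := by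
    rw [perp, relIndex_ker, ← CommGroup.card_monoidHom_of_hasEnoughRootsOfUnity I ℂ]
    exact Nat.card_le_card_of_injective _ Subtype.val_injective
  calc Nat.card H = Nat.card (H ⊓ ε.perp I : Subgroup K) * (ε.perp I).relIndex H :=
        (card_inf_mul_relIndex _ _).symm
    _ ≤ _ := Nat.mul_le_mul_left _ hrange

theorem card_perp_mul_card_le (hε : Injective ε) (I : Subgroup K) :
    Nat.card (ε.perp I) * Nat.card I ≤ Nat.card K := by
  have : ε.perp I = (domRestrictHom I ℂˣ).ker.comap ε := rfl
  calc Nat.card (ε.perp I) * Nat.card I ≤ Nat.card (K ⧸ I) * Nat.card I := by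
        gcongr
        rw [← CommGroup.card_domRestrictHom_ker ℂ I, this]
        exact Nat.card_le_card_of_injective (fun x => ⟨ε x, x.2⟩)
          fun x y h => Subtype.ext (hε (congrArg Subtype.val h))
    _ = Nat.card K := (card_eq_card_quotient_mul_card_subgroup I).symm

theorem exists_isIsotropic_card_le_mul_self (hε : ∀ a, ε a a = 1) (H : Subgroup K) :
    ∃ L ≤ H, ε.IsIsotropic L ∧ Nat.card H ≤ Nat.card L * Nat.card L := by
  obtain ⟨L, ⟨hLH, hL⟩, hmax⟩ := Set.exists_max_image {J : Subgroup K | J ≤ H ∧ ε.IsIsotropic J}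
    (fun J => Nat.card J) (Set.toFinite _) ⟨⊥, bot_le, bot_le⟩
  have hperp : H ⊓ ε.perp L ≤ L := by
    intro x ⟨hxH, hxL⟩
    have hsup : L ⊔ zpowers x = L :=
      (eq_of_le_of_card_ge le_sup_left
        (hmax _ ⟨sup_le hLH (zpowers_le.mpr hxH), hL.sup_zpowers hε hxL⟩)).symm
    exact hsup ▸ mem_sup_right (mem_zpowers x)
  refine ⟨L, hLH, hL, (ε.card_le_card_inf_perp_mul_card H L).trans ?_⟩
  exact Nat.mul_le_mul_right _ (card_le_of_le hperp)

theorem card_mul_self_le_of_isIsotropic (hε : Injective ε) {I : Subgroup K}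
    (hI : ε.IsIsotropic I) : Nat.card I * Nat.card I ≤ Nat.card K :=
  (Nat.mul_le_mul_right _ (card_le_of_le hI)).trans (card_perp_mul_card_le hε I)

theorem exists_card_eq_sq (hε : ∀ a, ε a a = 1) (hinj : Injective ε) :
    ∃ m, Nat.card K = m ^ 2 ∧ ∀ I : Subgroup K, ε.IsIsotropic I → Nat.card I ≤ m := by
  obtain ⟨L, -, hL, hKL⟩ := exists_isIsotropic_card_le_mul_self hε ⊤
  rw [card_top] at hKL
  have hK : Nat.card K = Nat.card L ^ 2 :=
    (sq (Nat.card L)).symm ▸ le_antisymm hKL (card_mul_self_le_of_isIsotropic hinj hL)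
  refine ⟨Nat.card L, hK, fun I hI => ?_⟩
  have := card_mul_self_le_of_isIsotropic hinj hI
  rw [hK, sq] at this
  exact Nat.mul_self_le_mul_self_iff.mp this

end MonoidHom

section CommutatorPairing

variable {G K C : Type*} [Group G] [CommGroup K] [CommGroup C] {ι : C →* G} {κ : G →* K}
  {e : K → K → C}

theorem pairing_eq_one_iff_commute (hι : Injective ι)
    (he : ∀ g₁ g₂ : G, ι (e (κ g₁) (κ g₂)) = g₁ * g₂ * g₁⁻¹ * g₂⁻¹) {x y : G} :
    e (κ x) (κ y) = 1 ↔ x * y = y * x := by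
  rw [← hι.eq_iff, he, map_one, mul_inv_eq_one, mul_inv_eq_iff_eq_mul]

theorem pairing_self (hι : Injective ι) (hκ : Surjective κ)
    (he : ∀ g₁ g₂ : G, ι (e (κ g₁) (κ g₂)) = g₁ * g₂ * g₁⁻¹ * g₂⁻¹) (a : K) : e a a = 1 := by
  obtain ⟨g, rfl⟩ := hκ a
  exact (pairing_eq_one_iff_commute hι he).mpr rfl

theorem pairing_mul_left (hι : Injective ι) (hcent : ∀ c, ι c ∈ center G) (hκ : Surjective κ)
    (he : ∀ g₁ g₂ : G, ι (e (κ g₁) (κ g₂)) = g₁ * g₂ * g₁⁻¹ * g₂⁻¹) (a b c : K) :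
    e (a * b) c = e a c * e b c := by
  obtain ⟨x, rfl⟩ := hκ a
  obtain ⟨y, rfl⟩ := hκ b
  obtain ⟨z, rfl⟩ := hκ c
  apply hι
  rw [← map_mul, he, mul_comm, map_mul, he, he]
  -- `⁅y, z⁆` is central, so it can be moved out of the conjugation by `x`
  calc x * y * z * (x * y)⁻¹ * z⁻¹ = x * (y * z * y⁻¹ * z⁻¹) * (z * x⁻¹ * z⁻¹) := by group
    _ = (y * z * y⁻¹ * z⁻¹) * x * (z * x⁻¹ * z⁻¹) := by
        rw [← he, (mem_center_iff.mp (hcent _) x)]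
    _ = _ := by group

theorem pairing_swap (hι : Injective ι) (hκ : Surjective κ)
    (he : ∀ g₁ g₂ : G, ι (e (κ g₁) (κ g₂)) = g₁ * g₂ * g₁⁻¹ * g₂⁻¹) (a b : K) :
    e b a = (e a b)⁻¹ := by
  obtain ⟨x, rfl⟩ := hκ a
  obtain ⟨y, rfl⟩ := hκ b
  apply hι
  rw [map_inv, he, he]
  group

theorem exists_monoidHom_eq_pairing (hι : Injective ι) (hcent : ∀ c, ι c ∈ center G)
    (hκ : Surjective κ) (he : ∀ g₁ g₂ : G, ι (e (κ g₁) (κ g₂)) = g₁ * g₂ * g₁⁻¹ * g₂⁻¹) :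
    ∃ ε : K →* K →* C, ∀ a b, ε a b = e a b := by
  have hmul_right (a b c : K) : e a (b * c) = e a b * e a c := by
    rw [pairing_swap hι hκ he (b * c), pairing_swap hι hκ he b, pairing_swap hι hκ he c,
      pairing_mul_left hι hcent hκ he, mul_inv]
  exact ⟨MonoidHom.mk' (fun a => MonoidHom.mk' (e a) (hmul_right a))
    (fun a b => MonoidHom.ext (pairing_mul_left hι hcent hκ he a b)), fun _ _ => rfl⟩

end CommutatorPairing

section FiniteSubgroup

variable {G K F : Type*} [Group G] [Group K] [Field F] [IsAlgClosed F] {ι : Fˣ →* G}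
  {κ : G →* K}

theorem exists_map_eq_and_pow_eq_one (hcent : ∀ c, ι c ∈ center G) (hker : κ.ker = ι.range)
    {n : ℕ} (hn : 0 < n) {g : G} (hg : κ g ^ n = 1) : ∃ g', κ g' = κ g ∧ g' ^ n = 1 := by
  obtain ⟨w, hw⟩ : g ^ n ∈ ι.range := hker ▸ (by rwa [MonoidHom.mem_ker, map_pow])
  obtain ⟨z, hz⟩ := IsAlgClosed.exists_pow_nat_eq (w : F) hn
  have hz0 : z ≠ 0 := by
    rintro rfl
    exact w.ne_zero (by rw [← hz, zero_pow hn.ne'])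
  set u := Units.mk0 z hz0
  have hκι : κ (ι u⁻¹) = 1 := by
    rw [← MonoidHom.mem_ker, hker]
    exact ⟨_, rfl⟩
  refine ⟨g * ι u⁻¹, by rw [map_mul, hκι, mul_one], ?_⟩
  rw [Commute.mul_pow (mem_center_iff.mp (hcent u⁻¹) g), ← hw, ← map_pow, ← map_mul, inv_pow]
  rw [show u ^ n = w from Units.ext (by simp [u, hz]), mul_inv_cancel, map_one]

open scoped IsMulCommutative in
theorem exists_finite_subgroup_map_eq_top [Finite K] (hι : Injective ι)
    (hcent : ∀ c, ι c ∈ center G) (hκ : Surjective κ) (hker : κ.ker = ι.range) :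
    ∃ B : Subgroup G, (B : Set G).Finite ∧ B.map κ = ⊤ := by
  have : (center G).FiniteIndex :=
    finiteIndex_of_le (H := κ.ker) (hker ▸ by rintro _ ⟨c, rfl⟩; exact hcent c)
  set n := (center G).index * Nat.card K
  have : NeZero n := ⟨mul_ne_zero FiniteIndex.index_ne_zero Nat.card_pos.ne'⟩
  -- the `n`-th power map is a homomorphism, since `g ↦ g ^ (center G).index` is the transfer
  set B := (MonoidHom.transferCenterPow G ^ Nat.card K).ker
  have hB (g : G) : g ∈ B ↔ g ^ n = 1 := by
    rw [MonoidHom.mem_ker, ← OneMemClass.coe_eq_one, MonoidHom.pow_apply, SubmonoidClass.coe_pow,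
      MonoidHom.transferCenterPow_apply, pow_mul]
  have hlift (k : K) : ∃ g ∈ B, κ g = k := by
    obtain ⟨g, rfl⟩ := hκ k
    obtain ⟨g', h1, h2⟩ := exists_map_eq_and_pow_eq_one hcent hker (NeZero.pos n)
      (g := g) (by rw [pow_mul', pow_card_eq_one', one_pow])
    exact ⟨g', (hB g').mpr h2, h1⟩
  choose s hsB hs using hlift
  refine ⟨B, (Set.finite_range fun p : rootsOfUnity n F × K => ι p.1 * s p.2).subset ?_,
    eq_top_iff.mpr fun k _ => ⟨s k, hsB k, hs k⟩⟩
  intro g hg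
  obtain ⟨c, hc⟩ : g * (s (κ g))⁻¹ ∈ ι.range := hker ▸ (by simp [hs])
  have hc' : c ∈ rootsOfUnity n F := by
    rw [mem_rootsOfUnity, ← hι.eq_iff, map_pow, hc, map_one, ← hB]
    exact B.mul_mem hg (B.inv_mem (hsB _))
  exact ⟨(⟨c, hc'⟩, κ g), by simp [hc]⟩

end FiniteSubgroup

theorem mul_card_le_card_of_map_eq_top {G K : Type*} [Group G] [Group K] [Finite K]
    {κ : G →* K} {A B : Subgroup G} [Finite B] (hB : B.map κ = ⊤) (hAB : A ≤ B) {m : ℕ}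
    (hK : Nat.card K = m ^ 2) (hA : Nat.card (A.map κ) ≤ m) : m * Nat.card A ≤ Nat.card B := by
  have : Finite (B ⊓ κ.ker : Subgroup G) := Finite.of_injective _ (inclusion_injective inf_le_left)
  have hker : Nat.card (A ⊓ κ.ker : Subgroup G) ≤ Nat.card (B ⊓ κ.ker : Subgroup G) :=
    card_le_of_le (inf_le_inf_right _ hAB)
  rw [← card_inf_mul_relIndex κ.ker A, ← card_inf_mul_relIndex κ.ker B, relIndex_ker,
    relIndex_ker, hB, card_top, hK]
  calc m * (Nat.card (A ⊓ κ.ker : Subgroup G) * Nat.card (A.map κ))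
      ≤ m * (Nat.card (B ⊓ κ.ker : Subgroup G) * m) := by gcongr
    _ = _ := by ring

section JordanBound

variable {G K : Type*} [Group G] [CommGroup K] {ι : ℂˣ →* G} {κ : G →* K} {e : K → K → ℂˣ}
  {ε : K →* K →* ℂˣ}

theorem isIsotropic_map_iff (hι : Injective ι)
    (he : ∀ g₁ g₂ : G, ι (e (κ g₁) (κ g₂)) = g₁ * g₂ * g₁⁻¹ * g₂⁻¹) (hεe : ∀ a b, ε a b = e a b)
    (A : Subgroup G) : ε.IsIsotropic (A.map κ) ↔ ∀ x ∈ A, ∀ y ∈ A, x * y = y * x := by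
  simp only [MonoidHom.isIsotropic_iff, mem_map, forall_exists_index, and_imp,
    forall_apply_eq_imp_iff₂, hεe, pairing_eq_one_iff_commute hι he]

theorem exists_commutative_normal_card_le_mul_card [Finite K] (hι : Injective ι)
    (he : ∀ g₁ g₂ : G, ι (e (κ g₁) (κ g₂)) = g₁ * g₂ * g₁⁻¹ * g₂⁻¹) (hεe : ∀ a b, ε a b = e a b)
    (hε : ∀ a, ε a a = 1) {m : ℕ} (hm : ∀ I : Subgroup K, ε.IsIsotropic I → Nat.card I ≤ m)
    (B : Subgroup G) [Finite B] :
    ∃ A ≤ B, (A.subgroupOf B).Normal ∧ (∀ x ∈ A, ∀ y ∈ A, x * y = y * x) ∧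
      Nat.card B ≤ m * Nat.card A := by
  obtain ⟨L, hLB, hL, hcard⟩ := ε.exists_isIsotropic_card_le_mul_self hε (B.map κ)
  have hAL : (B ⊓ L.comap κ).map κ ≤ L := map_le_iff_le_comap.mpr inf_le_right
  refine ⟨B ⊓ L.comap κ, inf_le_left, by rw [inf_subgroupOf_left]; infer_instance,
    (isIsotropic_map_iff hι he hεe _).mp (hL.mono hAL), ?_⟩
  have hrel : L.relIndex (B.map κ) ≤ Nat.card L := by
    have := card_inf_mul_relIndex L (B.map κ)
    rw [inf_of_le_right hLB] at this
    exact Nat.le_of_mul_le_mul_left (this.trans_le hcard) Nat.card_pos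
  calc Nat.card B = Nat.card (B ⊓ L.comap κ : Subgroup G) * L.relIndex (B.map κ) := by
        rw [← relIndex_comap, card_inf_mul_relIndex]
    _ ≤ Nat.card (B ⊓ L.comap κ : Subgroup G) * m := Nat.mul_le_mul_left _ (hrel.trans (hm L hL))
    _ = _ := mul_comm _ _

end JordanBound

/-- Let `1 → ℂ* → G → K → 1` be a central extension of a finite abelian group `K` by
`ℂ*` whose commutator pairing `e : K × K → ℂ*` is nondegenerate.  Then `G` is Jordan
with Jordan constant exactly `m = √#K`: every finite subgroup `B` of `G` contains an
abelian normal subgroup of index at most `m`, and there is a finite subgroup of `G`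
for which no abelian normal subgroup has index smaller than `m`. -/
theorem stmt15 {G K : Type*} [Group G] [CommGroup K] [Finite K]
    (ι : ℂˣ →* G) (hι : Function.Injective ι)
    (hcent : ∀ c : ℂˣ, ι c ∈ Subgroup.center G)
    (κ : G →* K) (hκ : Function.Surjective κ)
    (hker : κ.ker = ι.range)
    (e : K → K → ℂˣ)
    (he : ∀ g₁ g₂ : G, ι (e (κ g₁) (κ g₂)) = g₁ * g₂ * g₁⁻¹ * g₂⁻¹)
    (hnd : ∀ k : K, (∀ k' : K, e k k' = 1) → k = 1) :
    ∃ m : ℕ, Nat.card K = m ^ 2 ∧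
      (∀ B : Subgroup G, (B : Set G).Finite →
        ∃ A : Subgroup G, A ≤ B ∧ (A.subgroupOf B).Normal ∧
          (∀ x ∈ A, ∀ y ∈ A, x * y = y * x) ∧
          Nat.card B ≤ m * Nat.card A) ∧
      (∃ B : Subgroup G, (B : Set G).Finite ∧
        ∀ A : Subgroup G, A ≤ B → (A.subgroupOf B).Normal →
          (∀ x ∈ A, ∀ y ∈ A, x * y = y * x) →
          m * Nat.card A ≤ Nat.card B) := by
  obtain ⟨ε, hεe⟩ := exists_monoidHom_eq_pairing hι hcent hκ he
  have hε (a : K) : ε a a = 1 := (hεe a a).trans (pairing_self hι hκ he a)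
  have hεinj : Injective ε := (injective_iff_map_eq_one ε).mpr fun k hk =>
    hnd k fun k' => by rw [← hεe, hk, MonoidHom.one_apply]
  obtain ⟨m, hKm, hm⟩ := ε.exists_card_eq_sq hε hεinj
  refine ⟨m, hKm, fun B hB => ?_, ?_⟩
  · have := hB.to_subtype
    exact exists_commutative_normal_card_le_mul_card hι he hεe hε hm B
  · obtain ⟨B, hB, hBκ⟩ := exists_finite_subgroup_map_eq_top hι hcent hκ hker
    have := hB.to_subtype
    exact ⟨B, hB, fun A hAB _ hA =>
      mul_card_le_card_of_map_eq_top hBκ hAB hKm (hm _ ((isIsotropic_map_iff hι he hεe A).mpr hA))⟩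
end

section
/- Let V be a finite-dimensional complex vector space, H a nonzero Hermitian form on V, and H' a Hermitian form on V with ker(H) ⊆ ker(H') (H' is dominated by H). Suppose L ⊂ V is a full lattice and L₁ ⊆ L is a complement to L₀ = L ∩ ker(Im H) on which E = Im H is nondegenerate. Then for all but finitely many positive integers n, the form E_n = Im(H' + nH) restricted to L₁ is nondegenerate and ker(H' + nH) = ker(H). -/
/-- Let `H ≠ 0` and `H'` be Hermitian forms on a finite-dimensional complex vector
space `V` with `ker H ⊆ ker H'` (`H'` dominated by `H`).  Let `w` be a `ℤ`-basis of a
complement `L₁` to `L₀ = L ∩ ker(Im H)` in a full lattice `L`, on which `E = Im H` is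
nondegenerate (nonzero Gram determinant), with `V = ker H + span_ℝ L₁`.  Then for all
but finitely many positive integers `n`, the form `E_n = Im(H' + nH)` restricted to
`L₁` is nondegenerate and `ker(H' + nH) = ker H`. -/
theorem stmt18 {V : Type*} [AddCommGroup V] [Module ℂ V] [FiniteDimensional ℂ V]
    (H H' : V → V → ℂ)
    (HaddH : ∀ u v w : V, H (u + v) w = H u w + H v w)
    (HsmulH : ∀ (c : ℂ) (u v : V), H (c • u) v = (starRingEnd ℂ) c * H u v)
    (HsymmH : ∀ u v : V, H v u = (starRingEnd ℂ) (H u v))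
    (HaddH' : ∀ u v w : V, H' (u + v) w = H' u w + H' v w)
    (HsmulH' : ∀ (c : ℂ) (u v : V), H' (c • u) v = (starRingEnd ℂ) c * H' u v)
    (HsymmH' : ∀ u v : V, H' v u = (starRingEnd ℂ) (H' u v))
    (hne : ∃ u v : V, H u v ≠ 0)
    (hdom : ∀ v : V, (∀ u : V, H v u = 0) → ∀ u : V, H' v u = 0)
    (h : ℕ) (hh : 0 < h) (w : Fin (2 * h) → V)
    (hnd : (Matrix.of fun i j => (H (w i) (w j)).im).det ≠ 0)
    (hsplit : ∀ v : V, ∃ v₀ v₁ : V, (∀ u : V, H v₀ u = 0) ∧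
      v₁ ∈ Submodule.span ℝ (Set.range w) ∧ v = v₀ + v₁) :
    {n : ℕ | 0 < n ∧ ¬
      ((Matrix.of fun i j =>
          (H' (w i) (w j)).im + (n : ℝ) * (H (w i) (w j)).im).det ≠ 0 ∧
        {v : V | ∀ u : V, H' v u + (n : ℂ) * H v u = 0} =
          {v : V | ∀ u : V, H v u = 0})}.Finite := by
  classical
  set A : Matrix (Fin (2*h)) (Fin (2*h)) ℝ := Matrix.of fun i j => (H (w i) (w j)).im with hA
  set A' : Matrix (Fin (2*h)) (Fin (2*h)) ℝ := Matrix.of fun i j => (H' (w i) (w j)).im with hA'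
  -- Step 1: if the determinant is nonzero, the kernel equality holds.
  have hker : ∀ n : ℕ,
      (Matrix.of fun i j => (H' (w i) (w j)).im + (n : ℝ) * (H (w i) (w j)).im).det ≠ 0 →
      {v : V | ∀ u : V, H' v u + (n : ℂ) * H v u = 0} = {v : V | ∀ u : V, H v u = 0} := by
    intro n hdet
    ext v
    simp only [Set.mem_setOf_eq]
    constructor
    · intro hv
      obtain ⟨v₀, v₁, hv₀, hv₁, rfl⟩ := hsplit v
      obtain ⟨c, hc⟩ := (Submodule.mem_span_range_iff_exists_fun ℝ).mp hv₁
      -- H (v₀ + v₁) u = H v₁ u, similarly for H'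
      have hHadd : ∀ u : V, H (v₀ + v₁) u = H v₁ u := by
        intro u; rw [HaddH, hv₀ u, zero_add]
      have hH'add : ∀ u : V, H' (v₀ + v₁) u = H' v₁ u := by
        intro u; rw [HaddH', hdom v₀ hv₀ u, zero_add]
      have hv₁eq : ∀ u : V, H' v₁ u + (n : ℂ) * H v₁ u = 0 := by
        intro u; rw [← hHadd, ← hH'add]; exact hv u
      -- expand v₁ = ∑ c i • w i
      have hzeroH : H 0 = fun _ => 0 := by
        funext u
        have := HaddH 0 0 u
        simp only [add_zero] at this
        exact right_eq_add.mp this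
      have hsumH : ∀ u : V, H v₁ u = ∑ i, (c i : ℂ) * H (w i) u := by
        intro u
        rw [← hc]
        induction (Finset.univ : Finset (Fin (2*h))) using Finset.induction with
        | empty => simp [congrFun hzeroH u]
        | insert _ _ hx ih =>
          rw [Finset.sum_insert hx, Finset.sum_insert hx, HaddH, ih, ← Complex.coe_smul,
            HsmulH]
          simp [Complex.conj_ofReal]
      have hsumH' : ∀ u : V, H' v₁ u = ∑ i, (c i : ℂ) * H' (w i) u := by
        intro u
        have hzeroH' : H' 0 = fun _ => 0 := by
          funext u
          have := HaddH' 0 0 u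
          simp only [add_zero] at this
          exact right_eq_add.mp this
        rw [← hc]
        induction (Finset.univ : Finset (Fin (2*h))) using Finset.induction with
        | empty => simp [congrFun hzeroH' u]
        | insert _ _ hx ih =>
          rw [Finset.sum_insert hx, Finset.sum_insert hx, HaddH', ih, ← Complex.coe_smul,
            HsmulH']
          simp [Complex.conj_ofReal]
      -- imaginary part equations
      have him : ∀ j, ∑ i, c i * ((H' (w i) (w j)).im + (n : ℝ) * (H (w i) (w j)).im) = 0 := by
        intro j
        have h1 := hv₁eq (w j)
        rw [hsumH (w j), hsumH' (w j)] at h1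
        have h2 : (∑ i, ((c i : ℂ) * H' (w i) (w j)
            + (n : ℂ) * ((c i : ℂ) * H (w i) (w j)))) = 0 := by
          rw [Finset.sum_add_distrib, ← Finset.mul_sum]; exact h1
        have h3 := congrArg Complex.im h2
        rw [Complex.im_sum, Complex.zero_im] at h3
        rw [← h3]
        apply Finset.sum_congr rfl
        intro i _
        simp only [Complex.add_im, Complex.mul_im, Complex.mul_re, Complex.ofReal_re,
          Complex.ofReal_im, Complex.natCast_re, Complex.natCast_im, zero_mul, mul_zero,
          add_zero, sub_zero, zero_add]
        ring
      -- conclude c = 0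
      have hc0 : c = 0 := by
        apply Matrix.eq_zero_of_mulVec_eq_zero
          (M := (Matrix.of fun i j => (H' (w i) (w j)).im + (n : ℝ) * (H (w i) (w j)).im).transpose)
        · rwa [Matrix.det_transpose]
        · funext j
          simpa [Matrix.mulVec, dotProduct, Matrix.transpose_apply, mul_comm] using him j
      have hv₁0 : v₁ = 0 := by rw [← hc, hc0]; simp
      intro u
      rw [hHadd u, hv₁0, congrFun hzeroH u]
    · intro hv u
      simp [hdom v hv u, hv u]
  -- Step 2: the determinant vanishes for only finitely many positive n.
  set q : Polynomial ℝ :=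
    (Matrix.of fun i j => Polynomial.C (A' i j) * Polynomial.X + Polynomial.C (A i j)).det
    with hq
  have hqeval : ∀ x : ℝ, q.eval x = (Matrix.of fun i j => A' i j * x + A i j).det := by
    intro x
    have hmap := RingHom.map_det (Polynomial.evalRingHom x)
      (Matrix.of fun i j => Polynomial.C (A' i j) * Polynomial.X + Polynomial.C (A i j))
    rw [hq]
    refine Eq.trans hmap ?_
    congr 1
    ext i j
    simp [RingHom.mapMatrix_apply, Matrix.map_apply]
  have hq0 : q ≠ 0 := by
    intro hq0
    apply hnd
    have := hqeval 0
    rw [hq0] at this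
    simp only [Polynomial.eval_zero, mul_zero, zero_add] at this
    rw [hA]
    exact this.symm
  have hroots : {x : ℝ | q.IsRoot x}.Finite := Polynomial.finite_setOf_isRoot hq0
  apply Set.Finite.subset (Set.Finite.preimage (f := fun n : ℕ => ((n : ℝ))⁻¹) ?_ hroots)
  · intro n hn
    simp only [Set.mem_setOf_eq] at hn
    obtain ⟨hnpos, hn2⟩ := hn
    have hdet0 : (Matrix.of fun i j =>
        (H' (w i) (w j)).im + (n : ℝ) * (H (w i) (w j)).im).det = 0 := by
      by_contra hne'
      exact hn2 ⟨hne', hker n hne'⟩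
    have hnR : (n : ℝ) ≠ 0 := Nat.cast_ne_zero.mpr hnpos.ne'
    simp only [Set.mem_preimage, Set.mem_setOf_eq, Polynomial.IsRoot]
    rw [hqeval]
    have hfactor : (Matrix.of fun i j => (H' (w i) (w j)).im + (n : ℝ) * (H (w i) (w j)).im)
        = (n : ℝ) • Matrix.of fun i j => A' i j * (n:ℝ)⁻¹ + A i j := by
      ext i j
      simp only [Matrix.of_apply, Matrix.smul_apply, smul_eq_mul, hA, hA', Matrix.of_apply]
      field_simp
    rw [hfactor, Matrix.det_smul] at hdet0
    rcases mul_eq_zero.mp hdet0 with h1 | h2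
    · exact absurd h1 (pow_ne_zero _ hnR)
    · exact h2
  · intro a _ b _ hab
    simp only at hab
    have := inv_inj.mp hab
    exact_mod_cast this
end
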